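/- Let k,l ≥ 2 and n ≥ 1. For positive integers r,s, the inequality r > s₀·s holds, where s₀ = √(l/k)·u with u = (√(kl)+√(kl−4))/2, if and only if the (k,l)-admissible word of r with its first term replaced by 0 is ≻-greater than or equal to the shift 0·[s]^{(l,k)} of the (l,k)-admissible word of s; equivalently, ⌈s₂^{(l,k)}·r⌉ − 1 ≥ s, where the shift prepends a zero, and this holds iff r ≥ 1 + ⌊s₀·s⌋. -/

import Mathlib

/-- The alternating coefficient sequence: `l - 2` at odd indices, `k - 2` at even ones. -/
def klCoeff (k l : ℕ) (i : ℕ) : ℕ := if i % 2 = 1 then l - 2 else k - 2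

/-- A forbidden pattern in a word. -/
def Forbidden (k l : ℕ) (c : ℕ → ℕ) : Prop :=
  ∃ i j : ℕ, 1 ≤ i ∧ i < j ∧
    ∀ h : ℕ, i ≤ h → h ≤ j → c h = klCoeff k l h + (if h = i ∨ h = j then 1 else 0)

/-- The set of (k,l)-admissible words (indexed from 1; position 0 is unused). -/
def Admissible (k l : ℕ) : Set (ℕ → ℕ) :=
  {c | c 0 = 0 ∧ (∃ N : ℕ, ∀ i : ℕ, N ≤ i → c i = 0) ∧
       (∀ i : ℕ, 1 ≤ i → c i ≤ klCoeff k l i + 1) ∧ ¬Forbidden k l c}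

/-- The evaluation map of a word against the (k,l)-sequence. -/
noncomputable def Gamma (a : ℕ → ℤ) (c : ℕ → ℕ) : ℤ := ∑ᶠ i : ℕ, (c i : ℤ) * a i

/-- The strict order `≺`: words compared at the highest index of disagreement. -/
def Prec (c d : ℕ → ℕ) : Prop := ∃ n : ℕ, c n < d n ∧ ∀ i : ℕ, n < i → c i = d i

/-- The reflexive closure `⪯` of `≺`. -/
def Preceq (c d : ℕ → ℕ) : Prop := c = d ∨ Prec c d

/-- The shift `0·c` of a word (prepend a zero, keeping indexing from 1). -/
def Shift (c : ℕ → ℕ) : ℕ → ℕ := fun i => if i ≤ 1 then 0 else c (i - 1)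

/-- The word with its first term replaced by 0. -/
def ZeroFirst (c : ℕ → ℕ) : ℕ → ℕ := fun i => if i = 1 then 0 else c i

/-
Write `s₀ = s₀^{(k,l)}` and `t` for the value of the `(l,k)`-word `c₂ c₃ …`. The sequence
`a_{i+1} - s₀ a'_i` satisfies the `(k,l)`-recurrence with the same two initial values as the
decaying solution `s_{i+1}^{(k,l)}`, so `r - s₀ t = ∑_{i ≥ 1} c_i s_i`. Because `s_i` is positive
and decreasing, the forbidden patterns bound this sum by `s₀`: it is the greedy estimate that gives
`∑_{i < n} c_i a_i < a_n`, read backwards. The sum is positive because `r > 0`, so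
`s₀ t < r ≤ s₀ (t + 1)`, i.e. `s₀ s < r ↔ s ≤ t`. Finally `s ≤ t` is `0·d ⪯ 0·c₂c₃…`, since
evaluation of admissible words is strictly increasing for `≺`.
-/

open Finset

def AdmissibleOn (C : ℕ → ℕ) (n : ℕ) (e : ℕ → ℕ) : Prop :=
  (∀ i, 1 ≤ i → i < n → e i ≤ C i + 1) ∧
  ∀ i j, 1 ≤ i → i < j → j < n → e i = C i + 1 → e j = C j + 1 → ∃ h, i < h ∧ h < j ∧ e h ≠ C h

def EndsInRun (C : ℕ → ℕ) (n : ℕ) (e : ℕ → ℕ) : Prop :=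
  ∃ i, 1 ≤ i ∧ i < n ∧ e i = C i + 1 ∧ ∀ h, i < h → h < n → e h = C h

section Bound

variable {R : Type*} [CommRing R] [LinearOrder R] [IsStrictOrderedRing R]
  {C : ℕ → ℕ} {A : ℕ → R} {e : ℕ → ℕ} {n : ℕ}

theorem AdmissibleOn.mono {m : ℕ} (he : AdmissibleOn C n e) (hmn : m ≤ n) : AdmissibleOn C m e :=
  ⟨fun i hi him => he.1 i hi (by omega),
    fun i j hi hij hjm => he.2 i j hi hij (by omega)⟩

theorem AdmissibleOn.not_endsInRun (he : AdmissibleOn C (n + 1) e) (hn : e n = C n + 1) :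
    ¬EndsInRun C n e := by
  rintro ⟨i, hi, hin, hei, hrun⟩
  obtain ⟨h, hih, hhn, hne⟩ := he.2 i n hi hin (by omega) hei hn
  exact hne (hrun h hih hhn)

theorem EndsInRun.succ (hrun : EndsInRun C n e) (he : e n = C n) : EndsInRun C (n + 1) e := by
  obtain ⟨i, hi, hin, hei, hrun⟩ := hrun
  refine ⟨i, hi, by omega, hei, fun h hih hhn => ?_⟩
  rcases Nat.lt_or_ge h n with h' | h'
  · exact hrun h hih h'
  · obtain rfl : h = n := by omega
    exact he

/-- The second bound is the induction invariant: a letter `C i + 1` can only be appended to a word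
that does not end in a run `C + 1, C, …, C`. -/
theorem sum_Ico_mul_le_of_admissibleOn (hA0 : 0 ≤ A 0) (hA : Monotone A)
    (hrec : ∀ i, i + 1 < n → A i + A (i + 2) = (C (i + 1) + 2) * A (i + 1))
    (he : AdmissibleOn C n e) :
    ∀ p, p + 1 ≤ n →
      ∑ i ∈ Ico 1 (p + 1), (e i : R) * A i ≤ A (p + 1) - A 1 + A 0 ∧
      (¬EndsInRun C (p + 1) e →
        ∑ i ∈ Ico 1 (p + 1), (e i : R) * A i ≤ A (p + 1) - A p - A 1 + A 0) := by
  intro p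
  induction p with
  | zero => intro _; simp [hA0]
  | succ p ih =>
    intro hp
    obtain ⟨hopen, hclosed⟩ := ih (by omega)
    have hrec_p := hrec p (by omega)
    have hmono : A p ≤ A (p + 1) := hA (Nat.le_succ p)
    have hpos : 0 ≤ A (p + 1) := hA0.trans (hA (Nat.zero_le _))
    rw [Finset.sum_Ico_succ_top (by omega)]
    have hbound := he.1 (p + 1) (by omega) (by omega)
    rcases (show e (p + 1) = C (p + 1) + 1 ∨ e (p + 1) = C (p + 1) ∨ e (p + 1) + 1 ≤ C (p + 1)
      by omega) with hmax | hrun | hsmall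
    · have := hclosed ((he.mono (by omega)).not_endsInRun hmax)
      rw [hmax]; push_cast
      exact ⟨by linarith, fun h => absurd ⟨p + 1, by omega, by omega, hmax, by omega⟩ h⟩
    · rw [hrun]
      refine ⟨by nlinarith, fun h => ?_⟩
      linarith [hclosed fun h' => h (h'.succ hrun)]
    · have : (e (p + 1) : R) + 1 ≤ C (p + 1) := by exact_mod_cast hsmall
      exact ⟨by nlinarith, fun _ => by nlinarith⟩

theorem AdmissibleOn.reflect (he : AdmissibleOn C n e) :
    AdmissibleOn (fun i => C (n - i)) n (fun i => e (n - i)) := by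
  refine ⟨fun i hi hin => he.1 (n - i) (by omega) (by omega),
    fun i j hi hij hjn hei hej => ?_⟩
  obtain ⟨h, hjh, hhi, hne⟩ := he.2 (n - j) (n - i) (by omega) (by omega) (by omega) hej hei
  refine ⟨n - h, by omega, by omega, ?_⟩
  show e (n - (n - h)) ≠ C (n - (n - h))
  rwa [Nat.sub_sub_self (by omega)]

theorem sum_Ico_mul_le (hA0 : 0 ≤ A 0) (hA : Monotone A)
    (hrec : ∀ i, i + 1 < n → A i + A (i + 2) = (C (i + 1) + 2) * A (i + 1))
    (he : AdmissibleOn C n e) (hn : 1 ≤ n) :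
    ∑ i ∈ Ico 1 n, (e i : R) * A i ≤ A n - A 1 + A 0 := by
  obtain ⟨p, rfl⟩ : ∃ p, n = p + 1 := ⟨n - 1, by omega⟩
  exact (sum_Ico_mul_le_of_admissibleOn hA0 hA hrec he p le_rfl).1

theorem sum_Ico_mul_le_of_antitone (hA : Antitone A) (hAn : 0 ≤ A n)
    (hrec : ∀ i, i + 1 < n → A i + A (i + 2) = (C (i + 1) + 2) * A (i + 1))
    (he : AdmissibleOn C n e) (hn : 1 ≤ n) :
    ∑ i ∈ Ico 1 n, (e i : R) * A i ≤ A 0 - A (n - 1) + A n := by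
  have hrefl := sum_Ico_mul_le (A := fun i => A (n - i)) (C := fun i => C (n - i)) (n := n)
    (by simpa using hAn) (fun i j hij => hA (by omega))
    (fun i hi => by
      obtain ⟨j, hj⟩ : ∃ j, n - i = j + 2 := ⟨n - i - 2, by omega⟩
      have := hrec j (by omega)
      simp only [hj, show n - (i + 2) = j by omega, show n - (i + 1) = j + 1 by omega]
      linarith) he.reflect hn
  simp only [Nat.sub_self, Nat.sub_zero] at hrefl
  have hreindex := Finset.sum_Ico_reflect (fun i => (e i : R) * A i) 1 (show n ≤ n + 1 by omega)
  rw [Nat.add_sub_cancel_left, Nat.add_sub_cancel] at hreindex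
  rwa [← hreindex]

end Bound

def AdmissibleFor (C : ℕ → ℕ) : Set (ℕ → ℕ) :=
  {c | c 0 = 0 ∧ (∃ N, ∀ i, N ≤ i → c i = 0) ∧ ∀ n, AdmissibleOn C n c}

theorem admissibleFor_of_mem_admissible {k l : ℕ} {c : ℕ → ℕ} (hc : c ∈ Admissible k l) :
    c ∈ AdmissibleFor (klCoeff k l) := by
  obtain ⟨hc0, hfin, hbound, hforb⟩ := hc
  refine ⟨hc0, hfin, fun n => ⟨fun i hi _ => hbound i hi, fun i j hi hij _ hci hcj => ?_⟩⟩
  by_contra! hrun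
  refine hforb ⟨i, j, hi, hij, fun h hih hhj => ?_⟩
  rcases hih.eq_or_lt with rfl | hih
  · simp [hci]
  rcases hhj.eq_or_lt with rfl | hhj
  · simp [hcj, hih.ne']
  · simp [hrun h hih hhj, hih.ne', hhj.ne]

def wordTail (c : ℕ → ℕ) : ℕ → ℕ := fun i => if i = 0 then 0 else c (i + 1)

theorem wordTail_mem_admissibleFor {C : ℕ → ℕ} {c : ℕ → ℕ} (hc : c ∈ AdmissibleFor C) :
    wordTail c ∈ AdmissibleFor (fun i => C (i + 1)) := by
  obtain ⟨-, ⟨N, hN⟩, hadm⟩ := hc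
  refine ⟨rfl, ⟨N, fun i hi => ?_⟩, fun n => ⟨fun i hi hin => ?_, fun i j hi hij hjn hci hcj => ?_⟩⟩
  · simp [wordTail, hN (i + 1) (by omega)]
  · simpa [wordTail, show i ≠ 0 by omega] using (hadm (n + 1)).1 (i + 1) (by omega) (by omega)
  · simp only [wordTail, show i ≠ 0 by omega, show j ≠ 0 by omega, if_false] at hci hcj
    obtain ⟨h, hih, hhj, hne⟩ := (hadm (n + 1)).2 (i + 1) (j + 1) (by omega) (by omega) (by omega)
      hci hcj
    refine ⟨h - 1, by omega, by omega, ?_⟩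
    simpa [wordTail, show h - 1 ≠ 0 by omega, Nat.sub_add_cancel (show 1 ≤ h by omega)] using hne

theorem shift_wordTail {c : ℕ → ℕ} (hc : c 0 = 0) : Shift (wordTail c) = ZeroFirst c := by
  funext i
  rcases Nat.lt_or_ge i 2 with hi | hi
  · interval_cases i <;> simp [Shift, ZeroFirst, hc]
  · simp [Shift, ZeroFirst, wordTail, show ¬i ≤ 1 by omega, show i - 1 ≠ 0 by omega,
      show i ≠ 1 by omega, Nat.sub_add_cancel (show 1 ≤ i by omega)]

theorem preceq_shift_iff {x y : ℕ → ℕ} (h0 : x 0 = y 0) :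
    Preceq (Shift x) (Shift y) ↔ Preceq x y := by
  have hshift : ∀ z : ℕ → ℕ, ∀ i, Shift z (i + 1) = if i = 0 then 0 else z i := fun z i => by
    simp [Shift]
  have heq : Shift x = Shift y ↔ x = y := by
    refine ⟨fun h => funext fun i => ?_, fun h => h ▸ rfl⟩
    have := congrFun h (i + 1)
    simp only [hshift] at this
    rcases Nat.eq_zero_or_pos i with rfl | hi
    · exact h0
    · simpa [hi.ne'] using this
  have hprec : Prec (Shift x) (Shift y) ↔ Prec x y := by
    constructor
    · rintro ⟨n, hlt, habove⟩
      obtain ⟨m, rfl⟩ : ∃ m, n = m + 1 := ⟨n - 1, by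
        rcases n with _ | n
        · simp [Shift] at hlt
        · omega⟩
      refine ⟨m, ?_, fun i hi => ?_⟩
      · rcases Nat.eq_zero_or_pos m with rfl | hm
        · simp [Shift] at hlt
        · simpa [hshift, hm.ne'] using hlt
      · simpa [hshift, show i ≠ 0 by omega] using habove (i + 1) (by omega)
    · rintro ⟨n, hlt, habove⟩
      have hn : n ≠ 0 := by rintro rfl; exact hlt.ne h0
      refine ⟨n + 1, by simpa [hshift, hn] using hlt, fun i hi => ?_⟩
      obtain ⟨j, rfl⟩ : ∃ j, i = j + 1 := ⟨i - 1, by omega⟩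
      simpa [hshift, show j ≠ 0 by omega] using habove j (by omega)
  exact or_congr heq hprec

theorem prec_or_prec_of_ne {x y : ℕ → ℕ} (hx : ∃ N, ∀ i, N ≤ i → x i = 0)
    (hy : ∃ N, ∀ i, N ≤ i → y i = 0) (hne : x ≠ y) : Prec x y ∨ Prec y x := by
  obtain ⟨Nx, hNx⟩ := hx
  obtain ⟨Ny, hNy⟩ := hy
  have hagree : ∀ i, Nx + Ny ≤ i → x i = y i := fun i hi => by
    rw [hNx i (by omega), hNy i (by omega)]
  obtain ⟨i, hi⟩ := Function.ne_iff.mp hne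
  set n := Nat.findGreatest (fun i => x i ≠ y i) (Nx + Ny)
  have hin : i ≤ Nx + Ny := by
    by_contra! h
    exact hi (hagree i h.le)
  have hn : x n ≠ y n := Nat.findGreatest_spec (P := fun i => x i ≠ y i) hin hi
  have habove : ∀ j, n < j → x j = y j := fun j hj => by
    by_cases hj' : j ≤ Nx + Ny
    · exact not_not.mp (Nat.findGreatest_is_greatest hj hj')
    · exact hagree j (by omega)
  rcases hn.lt_or_gt with h | h
  · exact .inl ⟨n, h, habove⟩
  · exact .inr ⟨n, h, fun j hj => (habove j hj).symm⟩

def IsRecurrent {R : Type*} [CommRing R] (C : ℕ → ℕ) (A : ℕ → R) : Prop :=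
  ∀ i, A i + A (i + 2) = (C (i + 1) + 2) * A (i + 1)

section Recurrence

variable {R : Type*} [CommRing R] {C : ℕ → ℕ}

theorem IsRecurrent.ext {x y : ℕ → R} (hx : IsRecurrent C x) (hy : IsRecurrent C y)
    (h0 : x 0 = y 0) (h1 : x 1 = y 1) : x = y := by
  suffices h : ∀ i, x i = y i ∧ x (i + 1) = y (i + 1) from funext fun i => (h i).1
  intro i
  induction i with
  | zero => exact ⟨h0, h1⟩
  | succ i ih =>
    refine ⟨ih.2, ?_⟩
    linear_combination (C (i + 1) + 2 : R) * ih.2 - ih.1 + hx i - hy i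

theorem IsRecurrent.intCast {A : ℕ → ℤ} (h : IsRecurrent C A) :
    IsRecurrent C (fun i => (A i : R)) := fun i => by
  simpa using congrArg (Int.cast : ℤ → R) (h i)

theorem IsRecurrent.monotone [LinearOrder R] [IsStrictOrderedRing R] {A : ℕ → R}
    (h : IsRecurrent C A) (h0 : 0 ≤ A 0) (h01 : A 0 ≤ A 1) : Monotone A := by
  suffices H : ∀ i, 0 ≤ A i ∧ A i ≤ A (i + 1) from monotone_nat_of_le_succ fun i => (H i).2
  intro i
  induction i with
  | zero => exact ⟨h0, h01⟩
  | succ i ih =>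
    have hpos : 0 ≤ A (i + 1) := ih.1.trans ih.2
    have hC : (0 : R) ≤ C (i + 1) := Nat.cast_nonneg _
    refine ⟨hpos, ?_⟩
    nlinarith [h i, mul_nonneg hC hpos]

end Recurrence

theorem klCoeff_succ (k l i : ℕ) : klCoeff k l (i + 1) = klCoeff l k i := by
  unfold klCoeff
  split_ifs <;> omega

theorem klCoeff_add_two {R : Type*} [CommRing R] {k l : ℕ} (hk : 2 ≤ k) (hl : 2 ≤ l) (i : ℕ) :
    (klCoeff k l i : R) + 2 = if i % 2 = 1 then (l : R) else k := by
  unfold klCoeff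
  split_ifs <;> simp [Nat.cast_sub, hk, hl]

theorem isRecurrent_klCoeff {k l : ℕ} (hk : 2 ≤ k) (hl : 2 ≤ l) {a : ℕ → ℤ}
    (heven : ∀ n : ℕ, a (2 * n + 2) = (l : ℤ) * a (2 * n + 1) - a (2 * n))
    (hodd : ∀ n : ℕ, a (2 * n + 3) = (k : ℤ) * a (2 * n + 2) - a (2 * n + 1)) :
    IsRecurrent (klCoeff k l) a := by
  intro i
  rw [klCoeff_add_two hk hl]
  obtain ⟨n, rfl | rfl⟩ := Nat.even_or_odd' i
  · rw [if_pos (by omega), heven n]; ring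
  · rw [if_neg (by omega), show 2 * n + 1 + 2 = 2 * n + 3 by ring, hodd n]; ring

theorem gamma_eq_sum_range {A : ℕ → ℤ} {x : ℕ → ℕ} {N : ℕ} (hx : ∀ i, N ≤ i → x i = 0) :
    Gamma A x = ∑ i ∈ range N, (x i : ℤ) * A i := by
  refine finsum_eq_finsetSum_of_support_subset _ fun i hi => ?_
  by_contra h
  simp_all

section Order

variable {C : ℕ → ℕ} {A : ℕ → ℤ} {x y : ℕ → ℕ}

theorem gamma_lt_gamma_of_prec (hA0 : A 0 = 0) (hA1 : 0 < A 1) (hA : Monotone A)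
    (hrec : IsRecurrent C A) (hx : x ∈ AdmissibleFor C) (hy0 : y 0 = 0)
    (hy : ∃ N, ∀ i, N ≤ i → y i = 0) (hxy : Prec x y) : Gamma A x < Gamma A y := by
  obtain ⟨hx0, ⟨Nx, hNx⟩, hxadm⟩ := hx
  obtain ⟨Ny, hNy⟩ := hy
  obtain ⟨n, hlt, habove⟩ := hxy
  have hn : 0 < n := Nat.pos_of_ne_zero (by rintro rfl; omega)
  set M := Nx + Ny + n + 1
  rw [gamma_eq_sum_range (N := M) fun i hi => hNx i (by omega),
    gamma_eq_sum_range (N := M) fun i hi => hNy i (by omega),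
    ← sum_range_add_sum_Ico _ (show n + 1 ≤ M by omega),
    ← sum_range_add_sum_Ico _ (show n + 1 ≤ M by omega), sum_range_succ, sum_range_succ]
  have htail : ∑ i ∈ Ico (n + 1) M, (x i : ℤ) * A i = ∑ i ∈ Ico (n + 1) M, (y i : ℤ) * A i :=
    sum_congr rfl fun i hi => by rw [habove i (by simp at hi; omega)]
  rw [htail]
  refine add_lt_add_left ?_ _
  have hprefix : ∑ i ∈ range n, (x i : ℤ) * A i < A n := by
    rw [range_eq_Ico, sum_eq_sum_Ico_succ_bot hn, hx0, Nat.cast_zero, zero_mul, zero_add]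
    have := sum_Ico_mul_le (le_of_eq hA0.symm) hA (fun i _ => hrec i) (hxadm n) hn
    linarith
  have hAn : 0 ≤ A n := hA0 ▸ hA (Nat.zero_le n)
  have hy_nonneg : 0 ≤ ∑ i ∈ range n, (y i : ℤ) * A i :=
    sum_nonneg fun i _ => mul_nonneg (Nat.cast_nonneg _) (hA0 ▸ hA (Nat.zero_le i))
  have hdigit : ((x n : ℤ) + 1) * A n ≤ y n * A n :=
    mul_le_mul_of_nonneg_right (by exact_mod_cast hlt) hAn
  linarith

theorem preceq_iff_gamma_le (hA0 : A 0 = 0) (hA1 : 0 < A 1) (hA : Monotone A)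
    (hrec : IsRecurrent C A) (hx : x ∈ AdmissibleFor C) (hy : y ∈ AdmissibleFor C) :
    Preceq x y ↔ Gamma A x ≤ Gamma A y := by
  constructor
  · rintro (rfl | hxy)
    · exact le_rfl
    · exact (gamma_lt_gamma_of_prec hA0 hA1 hA hrec hx hy.1 hy.2.1 hxy).le
  · intro hle
    by_contra hnot
    obtain ⟨hne, hnprec⟩ := not_or.mp hnot
    rcases prec_or_prec_of_ne hx.2.1 hy.2.1 hne with h | h
    · exact hnprec h
    · exact (gamma_lt_gamma_of_prec hA0 hA1 hA hrec hy hx.1 hx.2.1 h).not_ge hle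

end Order

/-- `u`, the larger root of `X² - √(kl) X + 1`. -/
noncomputable def klRoot (k l : ℕ) : ℝ := (√(k * l) + √(k * l - 4)) / 2

/-- The sequence `s^{(k,l)}`: `s_{2n+1} = u^{-2n}` and `s_{2n} = √(l/k) u^{-2n+1}`. -/
noncomputable def klWeight (k l : ℕ) (i : ℕ) : ℝ :=
  (if Even i then √(l / k) else 1) * klRoot k l * (klRoot k l)⁻¹ ^ i

section Weight

variable {k l : ℕ}

theorem four_le_natCast_mul (hk : 2 ≤ k) (hl : 2 ≤ l) : (4 : ℝ) ≤ k * l := by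
  have : (2 : ℝ) * 2 ≤ k * l :=
    mul_le_mul (by exact_mod_cast hk) (by exact_mod_cast hl) (by norm_num) (by positivity)
  linarith

theorem one_le_klRoot (hk : 2 ≤ k) (hl : 2 ≤ l) : 1 ≤ klRoot k l := by
  have h2 : (2 : ℝ) ≤ √(k * l) := Real.le_sqrt_of_sq_le (by linarith [four_le_natCast_mul hk hl])
  have := Real.sqrt_nonneg ((k : ℝ) * l - 4)
  unfold klRoot
  linarith

theorem klRoot_sq_add_one (hk : 2 ≤ k) (hl : 2 ≤ l) :
    klRoot k l ^ 2 + 1 = √(k * l) * klRoot k l := by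
  have hS := Real.sq_sqrt (show (0 : ℝ) ≤ k * l by positivity)
  have hT := Real.sq_sqrt (show (0 : ℝ) ≤ k * l - 4 by linarith [four_le_natCast_mul hk hl])
  unfold klRoot
  linear_combination -hS / 4 + hT / 4

theorem mul_sqrt_div_eq_sqrt_mul (hk : k ≠ 0) : (k : ℝ) * √(l / k) = √(k * l) := by
  rw [show (k : ℝ) * l = k ^ 2 * (l / k) by field_simp, Real.sqrt_mul (by positivity),
    Real.sqrt_sq (Nat.cast_nonneg k)]

theorem sqrt_div_mul_sqrt_mul_eq (hk : k ≠ 0) : √(l / k) * √(k * l) = l := by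
  rw [← Real.sqrt_mul (by positivity), show (l : ℝ) / k * (k * l) = l ^ 2 by
    have : (k : ℝ) ≠ 0 := by positivity
    field_simp, Real.sqrt_sq (by positivity)]

theorem klWeight_isRecurrent (hk : 2 ≤ k) (hl : 2 ≤ l) :
    IsRecurrent (klCoeff k l) (klWeight k l) := by
  intro i
  have hu : klRoot k l ≠ 0 := (one_le_klRoot hk hl).trans_lt' one_pos |>.ne'
  have hquad := klRoot_sq_add_one hk hl
  have hkq := mul_sqrt_div_eq_sqrt_mul (l := l) (by omega : k ≠ 0)
  have hlq := sqrt_div_mul_sqrt_mul_eq (l := l) (by omega : k ≠ 0)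
  rw [klCoeff_add_two hk hl]
  unfold klWeight
  rcases Nat.even_or_odd i with h | h
  · have h1 : (i + 1) % 2 = 1 := by rcases h with ⟨m, rfl⟩; omega
    simp only [h, h1, Nat.even_add_one, not_true, not_false_eq_true, if_true, if_false, pow_succ]
    field_simp
    rw [hquad, ← mul_assoc, hlq]
  · have h1 : ¬ (i + 1) % 2 = 1 := by rcases h with ⟨m, rfl⟩; omega
    have h' : ¬ Even i := Nat.not_even_iff_odd.mpr h
    simp only [h', h1, Nat.even_add_one, not_true, not_false_eq_true, if_true, if_false, pow_succ]
    field_simp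
    rw [hquad, ← hkq]
    ring

theorem klWeight_zero : klWeight k l 0 = √(l / k) * klRoot k l := by
  simp [klWeight]

theorem klWeight_one (hk : 2 ≤ k) (hl : 2 ≤ l) : klWeight k l 1 = 1 := by
  have hu : klRoot k l ≠ 0 := ((one_le_klRoot hk hl).trans_lt' one_pos).ne'
  simp [klWeight, hu]

theorem klWeight_pos (hk : 2 ≤ k) (hl : 2 ≤ l) (i : ℕ) : 0 < klWeight k l i := by
  have hu := (one_le_klRoot hk hl).trans_lt' one_pos
  have hq : 0 < √(l / k) :=
    Real.sqrt_pos.mpr (div_pos (Nat.cast_pos.mpr (by omega)) (Nat.cast_pos.mpr (by omega)))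
  unfold klWeight
  split_ifs <;> positivity

theorem klWeight_antitone (hk : 2 ≤ k) (hl : 2 ≤ l) : Antitone (klWeight k l) := by
  have hu := one_le_klRoot hk hl
  have hquad := klRoot_sq_add_one hk hl
  have hkq := mul_sqrt_div_eq_sqrt_mul (l := l) (by omega : k ≠ 0)
  have hlq := sqrt_div_mul_sqrt_mul_eq (l := l) (by omega : k ≠ 0)
  have hq : 0 ≤ √(l / k) := Real.sqrt_nonneg _
  have hk2 : (2 : ℝ) ≤ k := by exact_mod_cast hk
  have hl2 : (2 : ℝ) ≤ l := by exact_mod_cast hl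
  -- from `√(l/k) (u² + 1) = l u`, `k √(l/k) u = u² + 1` and `1 ≤ u`
  have hqu : 1 ≤ √(l / k) * klRoot k l := by nlinarith
  have hqle : √(l / k) ≤ klRoot k l := by nlinarith
  refine antitone_nat_of_succ_le fun i => ?_
  unfold klWeight
  rcases Nat.even_or_odd i with h | h
  · simp only [h, Nat.even_add_one, not_true, if_true, if_false, pow_succ]
    field_simp
    linarith [mul_comm (klRoot k l) √(l / k)]
  · have h' : ¬ Even i := Nat.not_even_iff_odd.mpr h
    simp only [h', Nat.even_add_one, not_false_eq_true, if_true, if_false, pow_succ]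
    field_simp
    exact hqle

end Weight

section Ratio

variable {k l : ℕ} {a a' : ℕ → ℤ}

theorem sub_mul_eq_klWeight (hk : 2 ≤ k) (hl : 2 ≤ l)
    (ha : IsRecurrent (klCoeff k l) a) (ha0 : a 0 = 0) (ha1 : a 1 = 1)
    (ha' : IsRecurrent (klCoeff l k) a') (ha'0 : a' 0 = 0) (ha'1 : a' 1 = 1) (i : ℕ) :
    (a (i + 1) : ℝ) - klWeight k l 0 * a' i = klWeight k l (i + 1) := by
  have hw := klWeight_isRecurrent hk hl
  have ha2 : (a 2 : ℝ) = l := by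
    have := (ha.intCast (R := ℝ)) 0
    rw [klCoeff_add_two hk hl] at this
    simp_all
  refine congrFun (IsRecurrent.ext (C := fun i => klCoeff k l (i + 1))
    (x := fun i => (a (i + 1) : ℝ) - klWeight k l 0 * a' i) (fun i => ?_)
    (fun i => hw (i + 1)) ?_ ?_) i
  · have h := (ha.intCast (R := ℝ)) (i + 1)
    have h' := (ha'.intCast (R := ℝ)) i
    rw [← klCoeff_succ k l (i + 1)] at h'
    linear_combination h - klWeight k l 0 * h'
  · simp [ha1, ha'0, klWeight_one hk hl]
  · have := hw 0
    rw [klCoeff_add_two hk hl] at this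
    simp only [zero_add, Nat.one_mod, if_true, klWeight_one hk hl, mul_one] at this
    simp only [ha2, ha'1, Int.cast_one, mul_one]
    linarith

theorem gamma_sub_mul_gamma_wordTail (hk : 2 ≤ k) (hl : 2 ≤ l)
    (ha : IsRecurrent (klCoeff k l) a) (ha0 : a 0 = 0) (ha1 : a 1 = 1)
    (ha' : IsRecurrent (klCoeff l k) a') (ha'0 : a' 0 = 0) (ha'1 : a' 1 = 1)
    {c : ℕ → ℕ} {N : ℕ} (hN : ∀ i, N ≤ i → c i = 0) :
    (Gamma a c : ℝ) - klWeight k l 0 * Gamma a' (wordTail c) =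
      ∑ i ∈ range N, (c (i + 1) : ℝ) * klWeight k l (i + 1) := by
  have htail : ∀ i, (wordTail c i : ℝ) * a' i = c (i + 1) * a' i := fun i => by
    rcases Nat.eq_zero_or_pos i with rfl | hi
    · simp [ha'0]
    · simp [wordTail, hi.ne']
  rw [gamma_eq_sum_range (N := N + 1) fun i hi => hN i (by omega),
    gamma_eq_sum_range (N := N) fun i hi => by simp [wordTail, hN (i + 1) (by omega)],
    sum_range_succ', ha0]
  push_cast
  simp only [htail, mul_zero, add_zero, mul_sum, ← sum_sub_distrib]
  refine sum_congr rfl fun i _ => ?_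
  rw [← sub_mul_eq_klWeight hk hl ha ha0 ha1 ha' ha'0 ha'1 i]
  ring

theorem sum_mul_klWeight_le (hk : 2 ≤ k) (hl : 2 ≤ l) {c : ℕ → ℕ}
    (hc : c ∈ AdmissibleFor (klCoeff k l)) (N : ℕ) :
    ∑ i ∈ range N, (c (i + 1) : ℝ) * klWeight k l (i + 1) ≤ klWeight k l 0 := by
  have hw := klWeight_antitone hk hl
  have hbound := sum_Ico_mul_le_of_antitone hw (klWeight_pos hk hl (N + 1)).le
    (fun i _ => klWeight_isRecurrent hk hl i) (hc.2.2 (N + 1)) (by omega)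
  rw [sum_Ico_eq_sum_range, Nat.add_sub_cancel] at hbound
  simp only [add_comm 1] at hbound
  linarith [hw (Nat.le_succ N)]

theorem sum_mul_klWeight_pos (hk : 2 ≤ k) (hl : 2 ≤ l) {c : ℕ → ℕ} (hc0 : c 0 = 0) {N : ℕ}
    (hN : ∀ i, N ≤ i → c i = 0) (hc : c ≠ 0) :
    0 < ∑ i ∈ range N, (c (i + 1) : ℝ) * klWeight k l (i + 1) := by
  obtain ⟨j, hj⟩ := Function.ne_iff.mp hc
  obtain ⟨i, rfl⟩ : ∃ i, j = i + 1 := ⟨j - 1, by rcases j with _ | j <;> simp_all⟩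
  have hi : i < N := by by_contra! h; exact hj (hN _ (by omega))
  refine sum_pos' (fun i _ => mul_nonneg (Nat.cast_nonneg _) (klWeight_pos hk hl _).le)
    ⟨i, mem_range.mpr hi, mul_pos ?_ (klWeight_pos hk hl _)⟩
  exact_mod_cast Nat.pos_of_ne_zero hj

theorem klWeight_mul_gamma_wordTail_lt_gamma (hk : 2 ≤ k) (hl : 2 ≤ l)
    (ha : IsRecurrent (klCoeff k l) a) (ha0 : a 0 = 0) (ha1 : a 1 = 1)
    (ha' : IsRecurrent (klCoeff l k) a') (ha'0 : a' 0 = 0) (ha'1 : a' 1 = 1)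
    {c : ℕ → ℕ} (hc : c ∈ AdmissibleFor (klCoeff k l)) (hpos : 0 < Gamma a c) :
    klWeight k l 0 * Gamma a' (wordTail c) < Gamma a c ∧
      (Gamma a c : ℝ) ≤ klWeight k l 0 * (Gamma a' (wordTail c) + 1) := by
  obtain ⟨N, hN⟩ := hc.2.1
  have hid := gamma_sub_mul_gamma_wordTail hk hl ha ha0 ha1 ha' ha'0 ha'1 hN
  have hne : c ≠ 0 := by rintro rfl; simp [Gamma] at hpos
  have hlower := sum_mul_klWeight_pos hk hl hc.1 hN hne
  have hupper := sum_mul_klWeight_le hk hl hc N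
  constructor <;> linarith

end Ratio

theorem ratio_via_admissible_words_general
    (k l : ℕ) (hk : 2 ≤ k) (hl : 2 ≤ l)
    (a a' : ℕ → ℤ)
    (ha0 : a 0 = 0) (ha1 : a 1 = 1)
    (haeven : ∀ n : ℕ, a (2 * n + 2) = (l : ℤ) * a (2 * n + 1) - a (2 * n))
    (haodd : ∀ n : ℕ, a (2 * n + 3) = (k : ℤ) * a (2 * n + 2) - a (2 * n + 1))
    (ha'0 : a' 0 = 0) (ha'1 : a' 1 = 1)
    (ha'even : ∀ n : ℕ, a' (2 * n + 2) = (k : ℤ) * a' (2 * n + 1) - a' (2 * n))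
    (ha'odd : ∀ n : ℕ, a' (2 * n + 3) = (l : ℤ) * a' (2 * n + 2) - a' (2 * n + 1))
    (u s0 : ℝ)
    (hu : u = (Real.sqrt ((k : ℝ) * l) + Real.sqrt ((k : ℝ) * l - 4)) / 2)
    (hs0 : s0 = Real.sqrt ((l : ℝ) / k) * u)
    (r s : ℕ) (hr : 1 ≤ r)
    (c d : ℕ → ℕ)
    (hc : c ∈ Admissible k l) (hd : d ∈ Admissible l k)
    (hcr : Gamma a c = (r : ℤ)) (hds : Gamma a' d = (s : ℤ)) :
    ((s0 * s < (r : ℝ)) ↔ Preceq (Shift d) (ZeroFirst c)) ∧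
    ((s0 * s < (r : ℝ)) ↔ (s : ℤ) ≤ ⌈s0⁻¹ * r⌉ - 1) ∧
    ((s0 * s < (r : ℝ)) ↔ 1 + ⌊s0 * s⌋ ≤ (r : ℤ)) := by
  obtain rfl : s0 = klWeight k l 0 := by rw [hs0, hu, klWeight_zero, klRoot]
  have ha := isRecurrent_klCoeff hk hl haeven haodd
  have ha' := isRecurrent_klCoeff hl hk ha'even ha'odd
  have hc' := admissibleFor_of_mem_admissible hc
  have hd' := admissibleFor_of_mem_admissible hd
  have htail : wordTail c ∈ AdmissibleFor (klCoeff l k) := by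
    simpa only [klCoeff_succ] using wordTail_mem_admissibleFor hc'
  have hw0 := klWeight_pos hk hl 0
  obtain ⟨hlower, hupper⟩ := klWeight_mul_gamma_wordTail_lt_gamma hk hl ha ha0 ha1 ha' ha'0 ha'1
    hc' (by rw [hcr]; exact_mod_cast hr)
  rw [hcr] at hlower hupper
  push_cast at hlower hupper
  set t := Gamma a' (wordTail c)
  have horder : Preceq (Shift d) (ZeroFirst c) ↔ (s : ℤ) ≤ t := by
    rw [← shift_wordTail hc'.1, preceq_shift_iff (hd'.1.trans htail.1.symm),
      preceq_iff_gamma_le ha'0 (by rw [ha'1]; exact one_pos)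
        (ha'.monotone ha'0.ge (by rw [ha'0, ha'1]; exact zero_le_one)) ha' hd' htail, hds]
  have hratio : klWeight k l 0 * s < r ↔ (s : ℤ) ≤ t := by
    constructor
    · intro h
      have : (s : ℝ) < t + 1 := lt_of_mul_lt_mul_left (h.trans_le hupper) hw0.le
      exact_mod_cast Int.lt_add_one_iff.mp (by exact_mod_cast this)
    · intro h
      exact lt_of_le_of_lt (mul_le_mul_of_nonneg_left (by exact_mod_cast h) hw0.le) hlower
  refine ⟨hratio.trans horder.symm, ?_, ?_⟩
  · rw [Int.le_sub_one_iff, Int.lt_ceil, ← div_eq_inv_mul, lt_div_iff₀ hw0, Int.cast_natCast,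
      mul_comm]
  · rw [add_comm, Int.add_one_le_iff, Int.floor_lt]
    push_cast
    rfl

/-- the ratio inequality `r > s₀ s` via admissible words. -/
theorem ratio_via_admissible_words
    (k l : ℕ) (hk : 2 ≤ k) (hl : 2 ≤ l)
    (a a' : ℕ → ℤ)
    (ha0 : a 0 = 0) (ha1 : a 1 = 1)
    (haeven : ∀ n : ℕ, a (2 * n + 2) = (l : ℤ) * a (2 * n + 1) - a (2 * n))
    (haodd : ∀ n : ℕ, a (2 * n + 3) = (k : ℤ) * a (2 * n + 2) - a (2 * n + 1))
    (ha'0 : a' 0 = 0) (ha'1 : a' 1 = 1)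
    (ha'even : ∀ n : ℕ, a' (2 * n + 2) = (k : ℤ) * a' (2 * n + 1) - a' (2 * n))
    (ha'odd : ∀ n : ℕ, a' (2 * n + 3) = (l : ℤ) * a' (2 * n + 2) - a' (2 * n + 1))
    (u s0 : ℝ)
    (hu : u = (Real.sqrt ((k : ℝ) * l) + Real.sqrt ((k : ℝ) * l - 4)) / 2)
    (hs0 : s0 = Real.sqrt ((l : ℝ) / k) * u)
    (r s : ℕ) (hr : 1 ≤ r) (hs : 1 ≤ s)
    (c d : ℕ → ℕ)
    (hc : c ∈ Admissible k l) (hd : d ∈ Admissible l k)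
    (hcr : Gamma a c = (r : ℤ)) (hds : Gamma a' d = (s : ℤ)) :
    ((s0 * s < (r : ℝ)) ↔ Preceq (Shift d) (ZeroFirst c)) ∧
    ((s0 * s < (r : ℝ)) ↔ (s : ℤ) ≤ ⌈s0⁻¹ * r⌉ - 1) ∧
    ((s0 * s < (r : ℝ)) ↔ 1 + ⌊s0 * s⌋ ≤ (r : ℤ)) :=
  ratio_via_admissible_words_general k l hk hl a a' ha0 ha1 haeven haodd ha'0 ha'1 ha'even ha'odd u
    s0 hu hs0 r s hr c d hc hd hcr hds
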